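/- arXiv:math/0507260 — 2 statements merged into one kernel-verified Lean document; each statement's English description precedes it below -/
import Mathlib

section
/- Let F be a free group of finite rank n with basis x_1, …, x_n, and k ≥ 2. Let Aut F[k] be the group of automorphisms φ of F such that φ(x) x⁻¹ ∈ Γ^k F for all x ∈ F. Then the map J̃_k : Aut F[k] → Hom(F, (Γ^k F)/(Γ^{2k-1} F)) sending φ to the map (x_i ↦ φ(x_i) x_i⁻¹ mod Γ^{2k-1} F), extended to F using that the target is abelian, is a well-defined group homomorphism. -/
/-!
Write `γ j` for the lower central series (0-indexed, so `γ (k - 1) = Γ^k F`) and suppose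
`φ x * x⁻¹ ∈ γ j` for all `x`. The three subgroups lemma gives `⁅γ m, γ n⁆ ≤ γ (m + n + 1)`, and
with it an induction on `m` shows `φ a * a⁻¹ ∈ γ (m + j)` for `a ∈ γ m`: on a generator
`⁅p, q⁆` of `γ (m + 1)`, the corrections `φ p * p⁻¹` and `φ q * q⁻¹` drop out of
`⁅φ p, φ q⁆` modulo `γ (m + j + 1)`. For `a = ψ x * x⁻¹` and `b = φ x * x⁻¹` one has
`φ (ψ x) * x⁻¹ * (b * a)⁻¹ = (φ a * a⁻¹) * ⁅a, b⁆`, and both factors lie in `γ (2 * j)`.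
-/

open scoped commutatorElement

namespace QuotientGroup

variable {G : Type*} [Group G] {N : Subgroup G} [N.Normal]

theorem mk_commutatorElement (u v : G) : ((⁅u, v⁆ : G) : G ⧸ N) = ⁅(u : G ⧸ N), (v : G ⧸ N)⁆ :=
  map_commutatorElement (mk' N) u v

theorem commute_mk_of_commutatorElement_mem {u v : G} (h : ⁅u, v⁆ ∈ N) :
    Commute (u : G ⧸ N) v := by
  rw [← commutatorElement_eq_one_iff_commute, ← mk_commutatorElement, eq_one_iff]
  exact h

theorem mk_commutatorElement_mul_mul {u v p q : G} (hu : ∀ g, ⁅u, g⁆ ∈ N)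
    (hpv : ⁅p, v⁆ ∈ N) (hv : ⁅v, ⁅p, q⁆⁆ ∈ N) :
    ((⁅u * p, v * q⁆ : G) : G ⧸ N) = ⁅p, q⁆ := by
  have hu_central (g : G ⧸ N) : Commute (u : G ⧸ N) g :=
    induction_on g fun g => commute_mk_of_commutatorElement_mem (hu g)
  simp only [mk_commutatorElement, mk_mul]
  rw [commutatorElement_mul_left_eq_conj_mul, (hu_central _).eq, mul_inv_cancel_right,
    (hu_central _).commutator_eq, mul_one, commutatorElement_mul_right_eq_mul_conj,
    (commute_mk_of_commutatorElement_mem hpv).commutator_eq, one_mul, ← mk_commutatorElement,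
    (commute_mk_of_commutatorElement_mem hv).eq, mul_inv_cancel_right]

end QuotientGroup

namespace Subgroup

variable {G : Type*} [Group G]

theorem commutator_commutator_le_of_rotate {N H₁ H₂ H₃ : Subgroup G} [N.Normal]
    (h1 : ⁅⁅H₂, H₃⁆, H₁⁆ ≤ N) (h2 : ⁅⁅H₃, H₁⁆, H₂⁆ ≤ N) : ⁅⁅H₁, H₂⁆, H₃⁆ ≤ N := by
  have key (A B C : Subgroup G) : ⁅⁅A, B⁆, C⁆ ≤ N ↔
      ⁅⁅A.map (QuotientGroup.mk' N), B.map (QuotientGroup.mk' N)⁆,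
        C.map (QuotientGroup.mk' N)⁆ = ⊥ := by
    rw [← map_commutator, ← map_commutator, map_eq_bot_iff, QuotientGroup.ker_mk']
  rw [key] at h1 h2 ⊢
  exact commutator_commutator_eq_bot_of_rotate h1 h2

theorem commutator_lowerCentralSeries_le (m n : ℕ) :
    ⁅lowerCentralSeries (⊤ : Subgroup G) m, lowerCentralSeries ⊤ n⁆ ≤
      lowerCentralSeries (⊤ : Subgroup G) (m + n + 1) := by
  induction m generalizing n with
  | zero => rw [commutator_comm, lowerCentralSeries_zero, Nat.zero_add]; rfl
  | succ m ih =>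
    rw [lowerCentralSeries_succ]
    refine commutator_commutator_le_of_rotate ?_ ?_
    · rw [commutator_comm ⊤, ← lowerCentralSeries_succ, commutator_comm]
      exact (ih (n + 1)).trans_eq (by congr 1; omega)
    · rw [commutator_comm _ (lowerCentralSeries ⊤ m)]
      exact (commutator_mono (ih n) le_rfl).trans_eq
        (by rw [← lowerCentralSeries_succ]; congr 1; omega)

theorem map_mul_inv_mem_lowerCentralSeries_add (φ : G →* G) {k : ℕ}
    (hφ : ∀ x, φ x * x⁻¹ ∈ lowerCentralSeries (⊤ : Subgroup G) k) (m : ℕ) {a : G}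
    (ha : a ∈ lowerCentralSeries ⊤ m) : φ a * a⁻¹ ∈ lowerCentralSeries ⊤ (m + k) := by
  induction m generalizing a with
  | zero => simpa using hφ a
  | succ m ih =>
    rw [Nat.add_right_comm]
    set N := lowerCentralSeries (⊤ : Subgroup G) (m + k + 1)
    let π := QuotientGroup.mk' N
    -- the elements fixed by `φ` modulo `N` form a subgroup, so commutator generators suffice
    suffices hle : lowerCentralSeries ⊤ (m + 1) ≤ (π.comp φ).eqLocus π by
      rw [← div_eq_mul_inv, ← QuotientGroup.eq_iff_div_mem]
      exact hle ha
    rw [lowerCentralSeries_succ, commutator_le]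
    rintro p hp q -
    have hp' : φ p * p⁻¹ ∈ lowerCentralSeries ⊤ (m + k) := ih hp
    have hq' : φ q * q⁻¹ ∈ lowerCentralSeries ⊤ k := hφ q
    have hpq : ⁅p, q⁆ ∈ lowerCentralSeries ⊤ (m + 1) := commutator_mem_commutator hp (mem_top q)
    show ((φ ⁅p, q⁆ : G) : G ⧸ N) = ⁅p, q⁆
    rw [map_commutatorElement, ← inv_mul_cancel_right (φ p) p, ← inv_mul_cancel_right (φ q) q]
    refine QuotientGroup.mk_commutatorElement_mul_mul (fun g => ?_) ?_ ?_
    · exact commutator_mem_commutator hp' (mem_top g)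
    · exact commutator_lowerCentralSeries_le m k (commutator_mem_commutator hp hq')
    · exact lowerCentralSeries_antitone _ (by omega)
        (commutator_lowerCentralSeries_le k (m + 1) (commutator_mem_commutator hq' hpq))

theorem map_map_mul_inv_mul_inv_mem_lowerCentralSeries {φ ψ : G →* G} {j : ℕ}
    (hφ : ∀ x, φ x * x⁻¹ ∈ lowerCentralSeries (⊤ : Subgroup G) j)
    (hψ : ∀ x, ψ x * x⁻¹ ∈ lowerCentralSeries (⊤ : Subgroup G) j) (x : G) :
    φ (ψ x) * x⁻¹ * ((φ x * x⁻¹) * (ψ x * x⁻¹))⁻¹ ∈ lowerCentralSeries ⊤ (2 * j) := by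
  set a := ψ x * x⁻¹
  set b := φ x * x⁻¹
  have hsplit : φ (ψ x) * x⁻¹ * (b * a)⁻¹ = (φ a * a⁻¹) * ⁅a, b⁆ := by
    rw [show ψ x = a * x from (inv_mul_cancel_right _ _).symm, map_mul]
    simp only [commutatorElement_def, b]
    group
  have hab : ⁅a, b⁆ ∈ lowerCentralSeries ⊤ (j + j) :=
    lowerCentralSeries_antitone _ (Nat.le_succ _)
      (commutator_lowerCentralSeries_le j j (commutator_mem_commutator (hψ x) (hφ x)))
  rw [hsplit, two_mul]
  exact mul_mem (map_mul_inv_mem_lowerCentralSeries_add φ hφ j (hψ x)) hab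

end Subgroup

theorem johnson_refinement_hom_general (n k : ℕ)
    (φ ψ : FreeGroup (Fin n) ≃* FreeGroup (Fin n))
    (hφ : ∀ x : FreeGroup (Fin n),
      φ x * x⁻¹ ∈ Subgroup.lowerCentralSeries (⊤ : Subgroup (FreeGroup (Fin n))) (k - 1))
    (hψ : ∀ x : FreeGroup (Fin n),
      ψ x * x⁻¹ ∈ Subgroup.lowerCentralSeries (⊤ : Subgroup (FreeGroup (Fin n))) (k - 1)) :
    (∀ x : FreeGroup (Fin n),
        φ (ψ x) * x⁻¹ ∈ Subgroup.lowerCentralSeries (⊤ : Subgroup (FreeGroup (Fin n))) (k - 1)) ∧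
    (∀ i : Fin n,
        (φ (ψ (FreeGroup.of i)) * (FreeGroup.of i)⁻¹) *
          ((φ (FreeGroup.of i) * (FreeGroup.of i)⁻¹) *
            (ψ (FreeGroup.of i) * (FreeGroup.of i)⁻¹))⁻¹
          ∈ Subgroup.lowerCentralSeries (⊤ : Subgroup (FreeGroup (Fin n))) (2 * k - 2)) := by
  refine ⟨fun x => ?_, fun i => ?_⟩
  · simpa only [mul_assoc, inv_mul_cancel_left] using mul_mem (hφ (ψ x)) (hψ x)
  · rw [show 2 * k - 2 = 2 * (k - 1) by omega]
    exact Subgroup.map_map_mul_inv_mul_inv_mem_lowerCentralSeries (φ := φ.toMonoidHom)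
      (ψ := ψ.toMonoidHom) hφ hψ _

/-- Let `F` be the free group of rank `n` with basis `x_1, …, x_n`, and `k ≥ 2`
(`Γ^k F = lowerCentralSeries F (k-1)` in Mathlib's indexing).  For automorphisms
`φ` in `Aut F[k]`, i.e. those with `φ(x) x⁻¹ ∈ Γ^k F` for all `x ∈ F`, the map
`J̃_k(φ) := (x_i ↦ φ(x_i) x_i⁻¹ mod Γ^{2k-1} F)` is a group homomorphism in `φ`:
`J̃_k(φψ) = J̃_k(φ)·J̃_k(ψ)` in the abelian group
`Hom(F, (Γ^k F)/(Γ^{2k-1} F))`, i.e. on each generator `x_i` the values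
`(φψ)(x_i) x_i⁻¹` and `(φ(x_i) x_i⁻¹)·(ψ(x_i) x_i⁻¹)` agree modulo `Γ^{2k-1} F`
(well-definedness: the values of `J̃_k` do land in `Γ^k F`). -/
theorem johnson_refinement_hom (n k : ℕ) (hk : 2 ≤ k)
    (φ ψ : FreeGroup (Fin n) ≃* FreeGroup (Fin n))
    (hφ : ∀ x : FreeGroup (Fin n),
      φ x * x⁻¹ ∈ Subgroup.lowerCentralSeries (⊤ : Subgroup (FreeGroup (Fin n))) (k - 1))
    (hψ : ∀ x : FreeGroup (Fin n),
      ψ x * x⁻¹ ∈ Subgroup.lowerCentralSeries (⊤ : Subgroup (FreeGroup (Fin n))) (k - 1)) :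
    (∀ x : FreeGroup (Fin n),
        φ (ψ x) * x⁻¹ ∈ Subgroup.lowerCentralSeries (⊤ : Subgroup (FreeGroup (Fin n))) (k - 1)) ∧
    (∀ i : Fin n,
        (φ (ψ (FreeGroup.of i)) * (FreeGroup.of i)⁻¹) *
          ((φ (FreeGroup.of i) * (FreeGroup.of i)⁻¹) *
            (ψ (FreeGroup.of i) * (FreeGroup.of i)⁻¹))⁻¹
          ∈ Subgroup.lowerCentralSeries (⊤ : Subgroup (FreeGroup (Fin n))) (2 * k - 2)) :=
  johnson_refinement_hom_general n k φ ψ hφ hψ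
end

section
/- The trivial group is acyclically closed, and a (possibly infinite) direct product of acyclically closed groups is acyclically closed. -/
/-!
Substitution and the acyclicity projection are natural in the coefficient group. Hence an
acyclic system over `∏ i, G i` projects to an acyclic system over each factor `G i`, and a
tuple solves the product system exactly when each of its coordinates solves the projected
system; the unique coordinate solutions therefore assemble into the unique solution.
-/

open Monoid

/-- The projection `G ∗ F_n → H₁(F_n)` killing `G`; a monomial is *acyclic*
if it lies in its kernel. -/
def acyProj (G : Type*) [Group G] (n : ℕ) :
    Coprod G (FreeGroup (Fin n)) →* Abelianization (FreeGroup (Fin n)) :=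
  Coprod.lift 1 Abelianization.of

/-- An *acyclic system* over `G`: equations `x_i = w_i(x_1,…,x_n)` with each
monomial `w_i ∈ G ∗ F_n` acyclic. -/
def IsAcyclicSystem {G : Type*} [Group G] {n : ℕ}
    (w : Fin n → Coprod G (FreeGroup (Fin n))) : Prop :=
  ∀ i, acyProj G n (w i) = 1

/-- Substitution of values `g : Fin n → G` for the variables in a monomial. -/
def acyEval {G : Type*} [Group G] {n : ℕ} (g : Fin n → G) :
    Coprod G (FreeGroup (Fin n)) →* G :=
  Coprod.lift (MonoidHom.id G) (FreeGroup.lift g)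

/-- `g` is a solution of the system `x_i = w_i`. -/
def IsSolution {G : Type*} [Group G] {n : ℕ}
    (w : Fin n → Coprod G (FreeGroup (Fin n))) (g : Fin n → G) : Prop :=
  ∀ i, acyEval g (w i) = g i

/-- A group is *acyclically closed* if every acyclic system over it has a
unique solution. -/
def AcyclicallyClosed (G : Type*) [Group G] : Prop :=
  ∀ (n : ℕ) (w : Fin n → Coprod G (FreeGroup (Fin n))),
    IsAcyclicSystem w → ∃! g : Fin n → G, IsSolution w g

section Naturality

variable {G H : Type*} [Group G] [Group H] (φ : G →* H) {n : ℕ}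

lemma acyEval_comp_map (g : Fin n → G) :
    (acyEval (φ ∘ g)).comp (Coprod.map φ (MonoidHom.id _)) = φ.comp (acyEval g) := by
  ext <;> simp [acyEval]

lemma acyEval_map_apply (g : Fin n → G) (x : Coprod G (FreeGroup (Fin n))) :
    acyEval (φ ∘ g) (Coprod.map φ (MonoidHom.id _) x) = φ (acyEval g x) :=
  DFunLike.congr_fun (acyEval_comp_map φ g) x

lemma acyProj_comp_map :
    (acyProj H n).comp (Coprod.map φ (MonoidHom.id _)) = acyProj G n := by
  ext <;> simp [acyProj]

lemma IsAcyclicSystem.map {w : Fin n → Coprod G (FreeGroup (Fin n))} (hw : IsAcyclicSystem w) :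
    IsAcyclicSystem fun j => Coprod.map φ (MonoidHom.id _) (w j) := fun j => by
  rw [← hw j, ← acyProj_comp_map φ, MonoidHom.comp_apply]

lemma IsSolution.map {w : Fin n → Coprod G (FreeGroup (Fin n))} {g : Fin n → G}
    (hg : IsSolution w g) :
    IsSolution (fun j => Coprod.map φ (MonoidHom.id _) (w j)) (φ ∘ g) := fun j => by
  rw [acyEval_map_apply, hg j, Function.comp_apply]

end Naturality

lemma isSolution_pi_iff {ι : Type*} {G : ι → Type*} [∀ i, Group (G i)] {n : ℕ}
    (w : Fin n → Coprod (∀ i, G i) (FreeGroup (Fin n))) (g : Fin n → ∀ i, G i) :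
    IsSolution w g ↔ ∀ i, IsSolution
      (fun j => Coprod.map (Pi.evalMonoidHom G i) (MonoidHom.id _) (w j)) (fun j => g j i) := by
  refine ⟨fun hg i => hg.map (Pi.evalMonoidHom G i), fun h j => funext fun i => ?_⟩
  exact (acyEval_map_apply (Pi.evalMonoidHom G i) g (w j)).symm.trans (h i j)

lemma acyclicallyClosed_of_subsingleton (G : Type*) [Group G] [Subsingleton G] :
    AcyclicallyClosed G :=
  fun _ _ _ => ⟨1, fun _ => Subsingleton.elim _ _, fun _ _ => Subsingleton.elim _ _⟩

lemma acyclicallyClosed_pi {ι : Type*} {G : ι → Type*} [∀ i, Group (G i)]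
    (hG : ∀ i, AcyclicallyClosed (G i)) : AcyclicallyClosed (∀ i, G i) := by
  intro n w hw
  choose s hs hs_unique using fun i => hG i n _ (hw.map (Pi.evalMonoidHom G i))
  refine ⟨fun j i => s i j, (isSolution_pi_iff w _).2 hs, fun g hg => ?_⟩
  funext j i
  exact congrFun (hs_unique i _ ((isSolution_pi_iff w g).1 hg i)) j

/-- The trivial group is acyclically closed, and any direct product of
acyclically closed groups is acyclically closed. -/
theorem trivial_and_prod_acyclicallyClosed :
    (∀ (G : Type) [Group G], Subsingleton G → AcyclicallyClosed G) ∧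
    (∀ (ι : Type) (G : ι → Type) [∀ i, Group (G i)],
        (∀ i, AcyclicallyClosed (G i)) → AcyclicallyClosed (∀ i, G i)) :=
  ⟨fun G _ _ => acyclicallyClosed_of_subsingleton G, fun _ _ _ => acyclicallyClosed_pi⟩
end
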